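/- Let D be the 2S×2S diagonal matrix diag(c, 1, 1, ..., 1) with c > 0 (a single entry c in position (1,1) and all other diagonal entries 1). Then for every 2S×2S real orthogonal matrix O there exists a 2S×2S real orthogonal symplectic matrix W such that OᵀDO = WᵀDW. In particular, every orthogonal non-symplectic transform of D is trivial: any quantum covariance matrix with the same eigenvalue multiset as D obtained by an orthogonal conjugation of D is already an orthogonal symplectic transform of D. -/

import Mathlib

open Matrix Polynomial
open scoped ComplexOrder

/-- The standard symplectic form `Ω` on `2S` phase-space coordinates ordered
`(q₁,p₁,…,q_S,p_S)`: the direct sum of `S` copies of `[[0,1],[-1,0]]`. -/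
def Omega (S : ℕ) : Matrix (Fin (2 * S)) (Fin (2 * S)) ℝ :=
  Matrix.of fun i j =>
    if i.val + 1 = j.val ∧ i.val % 2 = 0 then (1 : ℝ)
    else if j.val + 1 = i.val ∧ j.val % 2 = 0 then -1 else 0

/-- A `2S × 2S` real matrix is orthogonal symplectic if `WᵀW = 1` and `WᵀΩW = Ω`. -/
def IsOrthoSymp (S : ℕ) (W : Matrix (Fin (2 * S)) (Fin (2 * S)) ℝ) : Prop :=
  Wᵀ * W = 1 ∧ Wᵀ * Omega S * W = Omega S

/-!
Write `D = 1 + (c - 1) e eᵀ` with `e` the first basis vector. For orthogonal `A` the conjugate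
`Aᵀ D A = 1 + (c - 1) (Aᵀ e)(Aᵀ e)ᵀ` depends only on the unit vector `Aᵀ e`. The orthogonal
symplectic matrices are the orthogonal matrices commuting with `Ω`, i.e. the unitary group of
`ℝ^{2S} ≅ ℂ^S` with complex structure `Ω`, and this group acts transitively on the unit sphere:
a phase rotation `cos θ + sin θ • Ω` makes the hermitian product of two unit vectors a nonpositive real,
and then a complex Householder reflection carries one onto the other. Hence `Oᵀ e = Wᵀ e` for
some orthogonal symplectic `W`.
-/

-- `(c + s i) (a + b i)` is a nonpositive real number
lemma exists_rotation_mul_nonpos (a b : ℝ) :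
    ∃ c s : ℝ, c ^ 2 + s ^ 2 = 1 ∧ c * b + s * a = 0 ∧ c * a - s * b ≤ 0 := by
  let z : ℂ := ⟨a, b⟩
  have ha : ‖z‖ * Real.cos z.arg = a := Complex.norm_mul_cos_arg z
  have hb : ‖z‖ * Real.sin z.arg = b := Complex.norm_mul_sin_arg z
  refine ⟨-Real.cos z.arg, Real.sin z.arg, by rw [neg_sq, Real.cos_sq_add_sin_sq], ?_, ?_⟩
  · rw [← ha, ← hb]; ring
  · have : -Real.cos z.arg * a - Real.sin z.arg * b = -‖z‖ := by
      rw [← ha, ← hb]; linear_combination -‖z‖ * Real.cos_sq_add_sin_sq z.arg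
    rw [this, neg_nonpos]
    exact norm_nonneg z

section ComplexStructure

variable {n : Type*} [Fintype n] {J : Matrix n n ℝ}

lemma mulVec_dotProduct_mulVec_of_transpose_mul_self [DecidableEq n] {A : Matrix n n ℝ}
    (hA : Aᵀ * A = 1) (x y : n → ℝ) : A *ᵥ x ⬝ᵥ A *ᵥ y = x ⬝ᵥ y := by
  rw [dotProduct_mulVec, ← vecMul_transpose, vecMul_vecMul, hA, vecMul_one]

lemma mulVec_dotProduct_of_transpose_eq_neg (hJT : Jᵀ = -J) (x y : n → ℝ) :
    J *ᵥ x ⬝ᵥ y = -(x ⬝ᵥ J *ᵥ y) := by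
  rw [dotProduct_comm, dotProduct_mulVec, ← mulVec_transpose, hJT, neg_mulVec, neg_dotProduct,
    dotProduct_comm (J *ᵥ y)]

lemma dotProduct_mulVec_self_of_transpose_eq_neg (hJT : Jᵀ = -J) (x : n → ℝ) :
    x ⬝ᵥ J *ᵥ x = 0 := by
  have h := mulVec_dotProduct_of_transpose_eq_neg hJT x x
  rw [dotProduct_comm] at h
  linarith

variable [DecidableEq n]

lemma transpose_mul_self_of_transpose_eq_neg_of_mul_self_eq_neg_one (hJT : Jᵀ = -J)
    (hJJ : J * J = -1) : Jᵀ * J = 1 := by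
  rw [hJT, neg_mul, hJJ, neg_neg]

lemma mulVec_mulVec_self_of_mul_self_eq_neg_one (hJJ : J * J = -1) (x : n → ℝ) :
    J *ᵥ (J *ᵥ x) = -x := by
  rw [mulVec_mulVec, hJJ, neg_mulVec, one_mulVec]

lemma transpose_mul_self_of_sq_add_sq_eq_one (hJT : Jᵀ = -J) (hJJ : J * J = -1) {c s : ℝ}
    (hcs : c ^ 2 + s ^ 2 = 1) : (c • 1 + s • J)ᵀ * (c • 1 + s • J) = 1 := by
  rw [transpose_add, transpose_smul, transpose_smul, transpose_one, hJT]
  calc (c • 1 + s • -J) * (c • 1 + s • J)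
      = (c ^ 2 + s ^ 2) • (1 : Matrix n n ℝ) - s ^ 2 • (J * J + 1) := by
        simp only [add_mul, mul_add, smul_mul_smul_comm, one_mul, mul_one, smul_neg, neg_mul]
        module
    _ = 1 := by rw [hcs, hJJ, neg_add_cancel, smul_zero, one_smul, sub_zero]

/-- The complex Householder reflection in the complex line `span {u, J u}`, for a complex
structure `J` compatible with the dot product. -/
noncomputable def complexReflection (J : Matrix n n ℝ) (u : n → ℝ) : Matrix n n ℝ :=
  1 - (2 / (u ⬝ᵥ u)) • (vecMulVec u u + vecMulVec (J *ᵥ u) (J *ᵥ u))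

lemma complexReflection_transpose (J : Matrix n n ℝ) (u : n → ℝ) :
    (complexReflection J u)ᵀ = complexReflection J u := by
  simp only [complexReflection, transpose_sub, transpose_one, transpose_smul, transpose_add,
    transpose_vecMulVec]

lemma complexReflection_mul_self (hJT : Jᵀ = -J) (hJJ : J * J = -1) (u : n → ℝ) :
    complexReflection J u * complexReflection J u = 1 := by
  let P := vecMulVec u u + vecMulVec (J *ᵥ u) (J *ᵥ u)
  have hJu : J *ᵥ u ⬝ᵥ J *ᵥ u = u ⬝ᵥ u := mulVec_dotProduct_mulVec_of_transpose_mul_self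
    (transpose_mul_self_of_transpose_eq_neg_of_mul_self_eq_neg_one hJT hJJ) u u
  have hP : P * P = (u ⬝ᵥ u) • P := by
    simp only [P, add_mul, mul_add, vecMulVec_mul_vecMulVec, hJu,
      dotProduct_mulVec_self_of_transpose_eq_neg hJT, mulVec_dotProduct_of_transpose_eq_neg hJT,
      neg_zero, zero_smul, vecMulVec_zero, add_zero, zero_add, vecMulVec_smul, smul_add]
  -- also true when `u = 0`, where `2 / 0 = 0`
  have hκ : 2 / (u ⬝ᵥ u) * (2 / (u ⬝ᵥ u)) * (u ⬝ᵥ u) = 2 * (2 / (u ⬝ᵥ u)) := by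
    rcases eq_or_ne (u ⬝ᵥ u) 0 with h | h
    · simp [h]
    · field_simp
  change (1 - _ • P) * (1 - _ • P) = 1
  rw [sub_mul, mul_sub, mul_sub, one_mul, mul_one, one_mul, smul_mul_smul_comm, hP, smul_smul, hκ]
  module

lemma complexReflection_commute (hJT : Jᵀ = -J) (hJJ : J * J = -1) (u : n → ℝ) :
    Commute (complexReflection J u) J := by
  have hPJ : Commute (vecMulVec u u + vecMulVec (J *ᵥ u) (J *ᵥ u)) J := by
    simp only [Commute, SemiconjBy, add_mul, mul_add, vecMulVec_mul, mul_vecMulVec,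
      ← mulVec_transpose, hJT, neg_mulVec, mulVec_mulVec_self_of_mul_self_eq_neg_one hJJ,
      vecMulVec_neg, neg_vecMulVec, neg_neg]
    abel
  exact (Commute.one_left J).sub_left (hPJ.smul_left _)

lemma complexReflection_sub_mulVec (hJT : Jᵀ = -J) {x w : n → ℝ} (hxw : x ⬝ᵥ x = w ⬝ᵥ w)
    (hJ : x ⬝ᵥ J *ᵥ w = 0) (hne : x ≠ w) : complexReflection J (x - w) *ᵥ x = w := by
  set u := x - w
  have hJux : J *ᵥ u ⬝ᵥ x = 0 := by
    rw [mulVec_dotProduct_of_transpose_eq_neg hJT, sub_dotProduct,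
      dotProduct_mulVec_self_of_transpose_eq_neg hJT, dotProduct_comm w,
      mulVec_dotProduct_of_transpose_eq_neg hJT, hJ]
    simp
  have huu : u ⬝ᵥ u = 2 * (u ⬝ᵥ x) := by
    simp only [u, sub_dotProduct, dotProduct_sub, dotProduct_comm w x]
    linarith
  have hux : u ⬝ᵥ x ≠ 0 := by
    rw [← mul_ne_zero_iff_left two_ne_zero, ← huu, Ne, dotProduct_self_eq_zero, sub_eq_zero]
    exact hne
  have hκ : 2 / (u ⬝ᵥ u) * (u ⬝ᵥ x) = 1 := by
    rw [huu]; field_simp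
  simp only [complexReflection, sub_mulVec, one_mulVec, smul_mulVec, add_mulVec, vecMulVec_mulVec,
    hJux, op_smul_eq_smul, zero_smul, add_zero, smul_smul, hκ, one_smul]
  exact sub_sub_cancel x w

theorem exists_orthogonal_commute_mulVec_eq (hJT : Jᵀ = -J) (hJJ : J * J = -1) {x y : n → ℝ}
    (hxy : x ⬝ᵥ x = y ⬝ᵥ y) : ∃ V : Matrix n n ℝ, Vᵀ * V = 1 ∧ Commute V J ∧ V *ᵥ x = y := by
  rcases eq_or_ne x 0 with rfl | hx
  · rw [zero_dotProduct, eq_comm, dotProduct_self_eq_zero] at hxy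
    exact ⟨1, by simp, Commute.one_left J, by simp [hxy]⟩
  obtain ⟨c, s, hcs, him, hre⟩ := exists_rotation_mul_nonpos (x ⬝ᵥ y) (x ⬝ᵥ J *ᵥ y)
  set R := c • 1 + s • J
  set x' := R *ᵥ x
  have hR : Rᵀ * R = 1 := transpose_mul_self_of_sq_add_sq_eq_one hJT hJJ hcs
  have hRJ : Commute R J :=
    ((Commute.one_left J).smul_left c).add_left ((Commute.refl J).smul_left s)
  have hJxJy : J *ᵥ x ⬝ᵥ J *ᵥ y = x ⬝ᵥ y := mulVec_dotProduct_mulVec_of_transpose_mul_self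
    (transpose_mul_self_of_transpose_eq_neg_of_mul_self_eq_neg_one hJT hJJ) x y
  have hx'x' : x' ⬝ᵥ x' = y ⬝ᵥ y := by
    rw [mulVec_dotProduct_mulVec_of_transpose_mul_self hR, hxy]
  have hx'Jy : x' ⬝ᵥ J *ᵥ y = 0 := by
    simp only [x', R, add_mulVec, smul_mulVec, one_mulVec, add_dotProduct, smul_dotProduct,
      smul_eq_mul, hJxJy]
    exact him
  have hx'y : x' ⬝ᵥ y ≤ 0 := by
    simp only [x', R, add_mulVec, smul_mulVec, one_mulVec, add_dotProduct, smul_dotProduct,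
      smul_eq_mul, mulVec_dotProduct_of_transpose_eq_neg hJT]
    linarith
  have hne : x' ≠ y := by
    rintro h
    have hyy : y ⬝ᵥ y = 0 := le_antisymm (h ▸ hx'y) (by simpa using dotProduct_star_self_nonneg y)
    exact hx (dotProduct_self_eq_zero.mp (hxy.trans hyy))
  refine ⟨complexReflection J (x' - y) * R, ?_, ?_, ?_⟩
  · rw [transpose_mul, complexReflection_transpose, mul_assoc, ← mul_assoc (complexReflection _ _),
      complexReflection_mul_self hJT hJJ, one_mul, hR]
  · exact (complexReflection_commute hJT hJJ _).mul_left hRJ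
  · rw [← mulVec_mulVec, complexReflection_sub_mulVec hJT hx'x' hx'Jy hne]

end ComplexStructure

open scoped Kronecker

lemma Omega_transpose (S : ℕ) : (Omega S)ᵀ = -Omega S := by
  ext i j
  simp only [Omega, transpose_apply, of_apply, Matrix.neg_apply]
  split_ifs <;> first | omega | norm_num

-- `(a, b) ↦ 2a + b` matches the ordering `(q₁,p₁,…,q_S,p_S)` of the coordinates
lemma Omega_eq_submatrix_kronecker (S : ℕ) :
    Omega S = ((1 : Matrix (Fin S) (Fin S) ℝ) ⊗ₖ !![0, 1; -1, 0]).submatrix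
      (finProdFinEquiv.trans (finCongr (mul_comm S 2))).symm
      (finProdFinEquiv.trans (finCongr (mul_comm S 2))).symm := by
  ext i j
  obtain ⟨⟨a, b⟩, rfl⟩ := (finProdFinEquiv.trans (finCongr (mul_comm S 2))).surjective i
  obtain ⟨⟨a', b'⟩, rfl⟩ := (finProdFinEquiv.trans (finCongr (mul_comm S 2))).surjective j
  simp only [Omega, of_apply, submatrix_apply, kroneckerMap_apply, one_apply, Fin.ext_iff,
    Equiv.trans_apply, finProdFinEquiv_apply_val, finCongr_apply, Fin.val_cast]
  fin_cases b <;> fin_cases b' <;> simp <;> split_ifs <;> first | omega | simp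

lemma Omega_mul_self (S : ℕ) : Omega S * Omega S = -1 := by
  have hJ : !![(0 : ℝ), 1; -1, 0] * !![0, 1; -1, 0] = (-1 : ℝ) • 1 := by
    ext i j; fin_cases i <;> fin_cases j <;> simp
  rw [Omega_eq_submatrix_kronecker, submatrix_mul_equiv, ← mul_kronecker_mul, one_mul, hJ,
    kronecker_smul, one_kronecker_one, neg_one_smul]
  exact congrArg Neg.neg (submatrix_one_equiv _)

lemma isOrthoSymp_of_commute {S : ℕ} {W : Matrix (Fin (2 * S)) (Fin (2 * S)) ℝ}
    (hW : Wᵀ * W = 1) (hWΩ : Commute W (Omega S)) : IsOrthoSymp S W :=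
  ⟨hW, by rw [mul_assoc, ← hWΩ.eq, ← mul_assoc, hW, one_mul]⟩

lemma diagonal_ite_val_eq_zero {α : Type*} [Ring α] (m : ℕ) (c : α) :
    diagonal (fun j : Fin m => if j.val = 0 then c else 1) =
      1 + (c - 1) • vecMulVec (fun j : Fin m => if j.val = 0 then 1 else 0)
        (fun j => if j.val = 0 then 1 else 0) := by
  ext i j
  rcases eq_or_ne i j with rfl | hij
  · by_cases h : i.val = 0 <;> simp [h, vecMulVec_apply]
  · have : ¬(i.val = 0 ∧ j.val = 0) := fun h => hij (Fin.ext (h.1.trans h.2.symm))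
    simp only [diagonal_apply_ne _ hij, Matrix.add_apply, one_apply_ne hij, Matrix.smul_apply,
      vecMulVec_apply]
    split_ifs <;> simp_all

lemma transpose_mul_one_add_smul_vecMulVec_mul {n α : Type*} [Fintype n] [DecidableEq n]
    [CommRing α] (A : Matrix n n α) (t : α) (e : n → α) :
    Aᵀ * (1 + t • vecMulVec e e) * A = Aᵀ * A + t • vecMulVec (Aᵀ *ᵥ e) (Aᵀ *ᵥ e) := by
  rw [mul_add, add_mul, mul_one, mul_smul_comm, smul_mul_assoc, mul_vecMulVec, vecMulVec_mul,
    ← mulVec_transpose]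

theorem one_entry_diagonal_ONS_trivial_general (S : ℕ) (c : ℝ)
    (O : Matrix (Fin (2 * S)) (Fin (2 * S)) ℝ) (hO : Oᵀ * O = 1) :
    ∃ W : Matrix (Fin (2 * S)) (Fin (2 * S)) ℝ,
      IsOrthoSymp S W ∧
      Oᵀ * Matrix.diagonal (fun j : Fin (2 * S) => if j.val = 0 then c else 1) * O =
        Wᵀ * Matrix.diagonal (fun j : Fin (2 * S) => if j.val = 0 then c else 1) * W := by
  set e : Fin (2 * S) → ℝ := fun j => if j.val = 0 then 1 else 0
  have hOT : Oᵀᵀ * Oᵀ = 1 := by rw [transpose_transpose, mul_eq_one_comm, hO]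
  obtain ⟨W, hW, hWΩ, hWe⟩ := exists_orthogonal_commute_mulVec_eq (Omega_transpose S)
    (Omega_mul_self S) (mulVec_dotProduct_mulVec_of_transpose_mul_self hOT e e)
  have hWTe : Wᵀ *ᵥ e = Oᵀ *ᵥ e := by nth_rw 1 [← hWe]; rw [mulVec_mulVec, hW, one_mulVec]
  refine ⟨W, isOrthoSymp_of_commute hW hWΩ, ?_⟩
  rw [diagonal_ite_val_eq_zero, transpose_mul_one_add_smul_vecMulVec_mul,
    transpose_mul_one_add_smul_vecMulVec_mul, hO, hW, hWTe]

/-- Let `D = diag(c, 1, …, 1)` with `c > 0`. Then every orthogonal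
conjugation of `D` is already an orthogonal symplectic conjugation of `D`: for every
real orthogonal `O` there is an orthogonal symplectic `W` with `OᵀDO = WᵀDW`
(every orthogonal non-symplectic transform of `D` is trivial). -/
theorem one_entry_diagonal_ONS_trivial (S : ℕ) (c : ℝ) (hc : 0 < c)
    (O : Matrix (Fin (2 * S)) (Fin (2 * S)) ℝ) (hO : Oᵀ * O = 1) :
    ∃ W : Matrix (Fin (2 * S)) (Fin (2 * S)) ℝ,
      IsOrthoSymp S W ∧
      Oᵀ * Matrix.diagonal (fun j : Fin (2 * S) => if j.val = 0 then c else 1) * O =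
        Wᵀ * Matrix.diagonal (fun j : Fin (2 * S) => if j.val = 0 then c else 1) * W :=
  one_entry_diagonal_ONS_trivial_general S c O hO
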